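/- For integers s, t ≥ 1, m ≥ 1, and l ≥ 0, one has Σ_{m_1+m_2=m, m_1,m_2≥0} Σ_{|e|=m_2} ζ((s+m_1) ⊛ (((t+1) ⧢ ({2}^l))† ⊕ e)) − Σ_{m_1+m_2=m−1, m_1,m_2≥0} Σ_{|e|=m_2} ζ((s+m_1+1) ⊛ (((t+1) ⧢ ({2}^l))† ⊕ e)) = O_m((s) ⊛ ((t+1) ⧢ ({2}^l))†), where e runs over sequences of nonnegative integers of the appropriate depth with the indicated entry sum, and ⊕e is applied termwise. -/

import Mathlib

open scoped BigOperators

/-- The multiple zeta value of an index `k = (k₁, …, k_r)`: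
`ζ(k₁,…,k_r) = Σ_{1 ≤ m₁ < ⋯ < m_r} 1/(m₁^{k₁} ⋯ m_r^{k_r})`,
written as a `tsum` over strictly increasing tuples of positive integers. -/
noncomputable def mzv (k : List ℕ) : ℝ :=
  ∑' f : {f : Fin k.length → ℕ+ // StrictMono f},
    ∏ i : Fin k.length, (1 : ℝ) / (((f.1 i : ℕ) : ℝ) ^ (k.get i))

/-- Formal ℚ-linear combinations of indices. -/
abbrev IndexSum := List ℕ →₀ ℚ

/-- An index viewed as a formal sum. -/
noncomputable def ofIdx (k : List ℕ) : IndexSum := Finsupp.single k 1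

/-- ζ extended ℚ-linearly to formal sums of indices. -/
noncomputable def mzvL (x : IndexSum) : ℝ := x.sum fun k c => (c : ℝ) * mzv k

/-- The Ohno sum `O_m(k) = Σ_{|e| = m} ζ(k ⊕ e)`. -/
noncomputable def ohno (m : ℕ) (k : List ℕ) : ℝ :=
  ∑ e ∈ Finset.Nat.antidiagonalTuple k.length m,
    mzv (List.ofFn fun i : Fin k.length => k.get i + e i)

/-- The Ohno sum extended ℚ-linearly to formal sums of indices. -/
noncomputable def ohnoL (m : ℕ) (x : IndexSum) : ℝ := x.sum fun k c => (c : ℝ) * ohno m k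

/-- The multiset of shuffles of two lists. -/
def shuffles : List ℕ → List ℕ → Multiset (List ℕ)
  | [], l => {l}
  | a :: k, [] => {a :: k}
  | a :: k, b :: l =>
      ((shuffles k (b :: l)).map (a :: ·)) + ((shuffles (a :: k) l).map (b :: ·))
  termination_by k l => k.length + l.length

/-- The shuffle product of two indices, as a formal sum of indices. -/
noncomputable def shufL (k l : List ℕ) : IndexSum := ((shuffles k l).map ofIdx).sum

/-- The shuffle product, extended ℚ-bilinearly to formal sums of indices. -/
noncomputable def shuf (x y : IndexSum) : IndexSum :=
  x.sum fun k c => y.sum fun l d => (c * d) • shufL k l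

/-- Encoding of an index as a binary word: an entry `a` becomes the block
`false, true, …, true` with `a - 1` trues. -/
def encodeIdx (k : List ℕ) : List Bool := k.flatMap fun a => false :: List.replicate (a - 1) true

/-- Auxiliary decoder. -/
def decodeAux : List Bool → ℕ → List ℕ
  | [], n => [n]
  | false :: w, n => n :: decodeAux w 1
  | true :: w, n => decodeAux w (n + 1)

/-- Decoding of a binary word into an index. -/
def decodeIdx : List Bool → List ℕ
  | [] => []
  | _ :: w => decodeAux w 1

/-- The dual index `k†`: reverse the binary word of `k` and swap the letters. -/
def dualIdx (k : List ℕ) : List ℕ := decodeIdx (((encodeIdx k).reverse).map (fun b => !b))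

/-- Duality extended termwise to formal sums of indices. -/
noncomputable def dualL (x : IndexSum) : IndexSum := Finsupp.mapDomain dualIdx x

/-- `(a) ⊛ (l₁,…,l_r) = Σ_{i=1}^{r} (l₁,…,l_{i-1}, l_i + a, l_{i+1},…,l_r)`. -/
noncomputable def hastIdx (a : ℕ) (l : List ℕ) : IndexSum :=
  ∑ i : Fin l.length, Finsupp.single (l.set i (l.get i + a)) 1

/-- `⊛` extended ℚ-linearly in the second argument. -/
noncomputable def hast (a : ℕ) (x : IndexSum) : IndexSum := x.sum fun l c => c • hastIdx a l

/-- `Σ_{|e| = m} ζ((a) ⊛ (x ⊕ e))`, where for each index occurring in `x` the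
sequence `e` of nonnegative integers runs over the suitable depth (the depth of
that index) with entry sum `m`, and `⊕ e` is applied termwise. -/
noncomputable def zetaHastSum (a m : ℕ) (x : IndexSum) : ℝ :=
  x.sum fun k c => (c : ℝ) *
    ∑ e ∈ Finset.Nat.antidiagonalTuple k.length m,
      mzvL (hastIdx a (List.ofFn fun i : Fin k.length => k.get i + e i))

/-- Appending an entry `a` to each index occurring in a formal sum. -/
noncomputable def appendL (x : IndexSum) (a : ℕ) : IndexSum :=
  Finsupp.mapDomain (fun k => k ++ [a]) x

/-- `F_{m,l}(s; k) = O_m((s) ⧢ k ⧢ ({2}^l)) − O_m((s) ⧢ (k ⧢ ({2}^l))†)`. -/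
noncomputable def F (m l s : ℕ) (k : List ℕ) : ℝ :=
  ohnoL m (shuf (ofIdx [s]) (shufL k (List.replicate l 2)))
    - ohnoL m (shuf (ofIdx [s]) (dualL (shufL k (List.replicate l 2))))

/-- `D_{m,l}(s,t) = F_{m,l}(s;(t+1)) − F_{m,l}(t;(s+1))`. -/
noncomputable def D (m l s t : ℕ) : ℝ := F m l s [t + 1] - F m l t [s + 1]

/-!
Since `(a) ⊛ (k ⊕ e)` is the sum over the positions `i` of `(k + a δᵢ) ⊕ e`, exchanging the sum
over `e` with the sum over `i` gives `Σ_{|e|=m} ζ((a) ⊛ (x ⊕ e)) = O_m((a) ⊛ x)` for every formal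
sum `x`. The left-hand side of the theorem telescopes: the terms with `m₁ ≥ 1` of the first sum
are exactly the second sum, which leaves the term `m₁ = 0`.
-/

open Finsupp

lemma sum_cast_mul_eq_linearCombination (φ : List ℕ → ℝ) (x : IndexSum) :
    (x.sum fun k c => (c : ℝ) * φ k) = linearCombination ℚ φ x := by
  simp only [linearCombination_apply, Rat.smul_def]

lemma mzvL_eq_linearCombination : mzvL = linearCombination ℚ mzv :=
  funext (sum_cast_mul_eq_linearCombination mzv)

lemma ohnoL_eq_linearCombination (m : ℕ) : ohnoL m = linearCombination ℚ (ohno m) :=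
  funext (sum_cast_mul_eq_linearCombination (ohno m))

lemma hast_eq_linearCombination (a : ℕ) : hast a = linearCombination ℚ (hastIdx a) := by
  ext1 x; rw [linearCombination_apply]; rfl

lemma ohno_ofFn {n : ℕ} (f : Fin n → ℕ) (m : ℕ) :
    ohno m (List.ofFn f) = ∑ e ∈ Finset.Nat.antidiagonalTuple n m, mzv (List.ofFn (f + e)) := by
  suffices h : ∀ (k : List ℕ) (hk : k.length = n), (∀ i, k.get (i.cast hk.symm) = f i) →
      ohno m k = ∑ e ∈ Finset.Nat.antidiagonalTuple n m, mzv (List.ofFn (f + e)) from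
    h _ List.length_ofFn fun i => by simp
  rintro k rfl hf
  obtain rfl : k.get = f := funext hf
  rfl

lemma ofFn_set_get_add {n : ℕ} (f : Fin n → ℕ) (a : ℕ) (i : Fin (List.ofFn f).length) :
    (List.ofFn f).set i ((List.ofFn f).get i + a)
      = List.ofFn (f + Pi.single (i.cast List.length_ofFn) a) := by
  apply List.ext_getElem (by simp)
  intro j hj _
  by_cases hji : j = i <;> simp [Pi.single_apply, Fin.ext_iff, hji, eq_comm]

lemma hastIdx_ofFn {n : ℕ} (a : ℕ) (f : Fin n → ℕ) :
    hastIdx a (List.ofFn f) = ∑ i, single (List.ofFn (f + Pi.single i a)) 1 := by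
  simp only [hastIdx, ofFn_set_get_add]
  exact Fin.sum_congr' (fun i => single (List.ofFn (f + Pi.single i a)) (1 : ℚ)) _

lemma sum_mzvL_hastIdx_add_eq_ohnoL_hastIdx (a m : ℕ) (k : List ℕ) :
    ∑ e ∈ Finset.Nat.antidiagonalTuple k.length m,
      mzvL (hastIdx a (List.ofFn fun i => k.get i + e i)) = ohnoL m (hastIdx a k) := by
  conv_rhs => rw [← List.ofFn_get k]
  simp only [hastIdx_ofFn, ohnoL_eq_linearCombination, mzvL_eq_linearCombination, map_sum,
    linearCombination_single, one_smul, ohno_ofFn]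
  rw [Finset.sum_comm]
  simp only [add_right_comm]
  rfl

lemma zetaHastSum_eq_ohnoL_hast (a m : ℕ) (x : IndexSum) :
    zetaHastSum a m x = ohnoL m (hast a x) := by
  rw [zetaHastSum, sum_cast_mul_eq_linearCombination, hast_eq_linearCombination,
    ohnoL_eq_linearCombination, apply_linearCombination]
  congr 2 with k
  rw [← ohnoL_eq_linearCombination]
  exact sum_mzvL_hastIdx_add_eq_ohnoL_hastIdx a m k

lemma sum_antidiagonal_succ_sub_sum_antidiagonal {M : Type*} [AddCommGroup M] (f : ℕ → ℕ → M)
    (s n : ℕ) :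
    ∑ p ∈ Finset.HasAntidiagonal.antidiagonal (n + 1), f (s + p.1) p.2
      - ∑ p ∈ Finset.HasAntidiagonal.antidiagonal n, f (s + p.1 + 1) p.2 = f s (n + 1) := by
  rw [Finset.Nat.sum_antidiagonal_succ, add_zero]
  simp only [← add_assoc, add_sub_cancel_right]

theorem statement6_general (s t m l : ℕ) (hm : 1 ≤ m) :
    (∑ p ∈ Finset.HasAntidiagonal.antidiagonal m,
        zetaHastSum (s + p.1) p.2 (dualL (shufL [t + 1] (List.replicate l 2))))
      - ∑ p ∈ Finset.HasAntidiagonal.antidiagonal (m - 1),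
          zetaHastSum (s + p.1 + 1) p.2 (dualL (shufL [t + 1] (List.replicate l 2)))
    = ohnoL m (hast s (dualL (shufL [t + 1] (List.replicate l 2)))) := by
  obtain ⟨n, rfl⟩ := Nat.exists_eq_add_of_le' hm
  rw [Nat.add_sub_cancel, sum_antidiagonal_succ_sub_sum_antidiagonal
    (fun a m => zetaHastSum a m _), zetaHastSum_eq_ohnoL_hast]

/-- For integers `s, t ≥ 1`, `m ≥ 1`, and `l ≥ 0`,
`Σ_{m₁+m₂=m} Σ_{|e|=m₂} ζ((s+m₁) ⊛ (((t+1) ⧢ ({2}^l))† ⊕ e))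
  − Σ_{m₁+m₂=m−1} Σ_{|e|=m₂} ζ((s+m₁+1) ⊛ (((t+1) ⧢ ({2}^l))† ⊕ e))
  = O_m((s) ⊛ ((t+1) ⧢ ({2}^l))†)`. -/
theorem statement6 (s t m l : ℕ) (hs : 1 ≤ s) (ht : 1 ≤ t) (hm : 1 ≤ m) :
    (∑ p ∈ Finset.HasAntidiagonal.antidiagonal m,
        zetaHastSum (s + p.1) p.2 (dualL (shufL [t + 1] (List.replicate l 2))))
      - ∑ p ∈ Finset.HasAntidiagonal.antidiagonal (m - 1),
          zetaHastSum (s + p.1 + 1) p.2 (dualL (shufL [t + 1] (List.replicate l 2)))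
    = ohnoL m (hast s (dualL (shufL [t + 1] (List.replicate l 2)))) :=
  statement6_general s t m l hm
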